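/- Let S ⊆ ℂ be a nonempty closed convex set containing no line, S_∞ its asymptotic cone, and S_∞* = {w : ∀ z ∈ S_∞, Re(z·conj(w)) ≤ 0} (identifying the pairing with the real inner product Re(z·conj(w))). Let w₀ be in the interior of S_∞* and ε > 0. Then there exist δ > 0 and R₀ > 0 such that for all z ∈ S_ε := S + closedBall(0,ε) with |z| ≥ R₀, one has Re(z·conj(w₀)) ≤ −δ·|z|. -/

import Mathlib

/-!
If `w₀` lies at distance `r` inside the polar of the recession cone, every recession direction `u`
satisfies `⟪w₀, u⟫ ≤ -r ‖u‖`. If the estimate failed on `S`, there would be points `sₙ ∈ S` with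
`‖sₙ‖ → ∞` and `⟪w₀, sₙ⟫ > -‖sₙ‖ / n`; by compactness of the sphere and closed convexity of `S`, a
limit of the directions `sₙ / ‖sₙ‖` is a unit recession direction `u` with `⟪w₀, u⟫ ≥ 0`, which is
absurd. Passing from `S` to its `ε`-thickening costs only an additive `ε ‖w₀‖`, absorbed by halving
`δ` far enough from the origin.
-/

open Pointwise Filter Topology Metric

open scoped RealInnerProductSpace

/-- The asymptotic cone `S_∞` of a set. -/
def recessionCone {E : Type*} [Add E] (S : Set E) : Set E := {z | ∀ s ∈ S, z + s ∈ S}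

section NormedSpace

variable {E : Type*} [NormedAddCommGroup E] [NormedSpace ℝ E]

theorem mem_recessionCone_of_tendsto {S : Set E} (hScl : IsClosed S) (hSconv : Convex ℝ S)
    {s : ℕ → E} (hs : ∀ n, s n ∈ S) (hnorm : Tendsto (fun n => ‖s n‖) atTop atTop) {u : E}
    (hdir : Tendsto (fun n => ‖s n‖⁻¹ • s n) atTop (𝓝 u)) : u ∈ recessionCone S := by
  intro t ht
  have hinv : Tendsto (fun n => ‖s n‖⁻¹) atTop (𝓝 0) := hnorm.inv_tendsto_atTop
  have hcombo : ∀ᶠ n in atTop, (1 - ‖s n‖⁻¹) • t + ‖s n‖⁻¹ • s n ∈ S := by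
    filter_upwards [hnorm.eventually_ge_atTop 1] with n hn
    exact hSconv ht (hs n) (sub_nonneg.mpr (inv_le_one_of_one_le₀ hn)) (by positivity)
      (sub_add_cancel 1 _)
  have hlim : Tendsto (fun n => (1 - ‖s n‖⁻¹) • t + ‖s n‖⁻¹ • s n) atTop (𝓝 (u + t)) := by
    simpa [add_comm u t] using
      (((tendsto_const_nhds (x := (1 : ℝ))).sub hinv).smul_const t).add hdir
  exact hScl.mem_of_tendsto hlim hcombo

end NormedSpace

section InnerProductSpace

variable {E : Type*} [NormedAddCommGroup E] [InnerProductSpace ℝ E]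

theorem exists_inner_le_neg_mul_norm_of_mem_interior_polar {C : Set E} {w₀ : E}
    (hw₀ : w₀ ∈ interior {w : E | ∀ z ∈ C, ⟪w, z⟫ ≤ 0}) :
    ∃ r > 0, ∀ z ∈ C, ⟪w₀, z⟫ ≤ -r * ‖z‖ := by
  obtain ⟨r, hr, hball⟩ := isOpen_iff.mp isOpen_interior w₀ hw₀
  refine ⟨r / 2, half_pos hr, fun z hz => ?_⟩
  rcases eq_or_ne z 0 with rfl | hz0
  · simp
  have hnz : 0 < ‖z‖ := norm_pos_iff.mpr hz0
  have hmem : w₀ + (r / 2 * ‖z‖⁻¹) • z ∈ ball w₀ r := by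
    rw [mem_ball_iff_norm, add_sub_cancel_left, norm_smul, Real.norm_of_nonneg (by positivity),
      mul_assoc, inv_mul_cancel₀ hnz.ne', mul_one]
    linarith
  have hpolar := interior_subset (hball hmem) z hz
  rw [inner_add_left, real_inner_smul_left, real_inner_self_eq_norm_sq] at hpolar
  have hscale : r / 2 * ‖z‖⁻¹ * ‖z‖ ^ 2 = r / 2 * ‖z‖ := by field_simp
  linarith

theorem exists_inner_le_neg_mul_norm_add_closedBall {S : Set E} {w₀ : E} {δ R : ℝ}
    (hδ : 0 < δ) (hR : 0 < R) (hS : ∀ s ∈ S, R ≤ ‖s‖ → ⟪w₀, s⟫ ≤ -δ * ‖s‖) (ε : ℝ) :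
    ∃ δ' > 0, ∃ R' > 0, ∀ z ∈ S + closedBall (0 : E) ε, R' ≤ ‖z‖ → ⟪w₀, z⟫ ≤ -δ' * ‖z‖ := by
  refine ⟨δ / 2, half_pos hδ, max R (max (R + ε) (2 * ε * (δ + ‖w₀‖) / δ)),
    lt_max_of_lt_left hR, ?_⟩
  rintro _ ⟨s, hs, b, hb, rfl⟩ hz
  rw [mem_closedBall_zero_iff] at hb
  simp only [max_le_iff] at hz
  obtain ⟨-, hRε, hfar⟩ := hz
  have hsz : ‖s + b‖ ≤ ‖s‖ + ε := (norm_add_le s b).trans (by linarith)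
  have hsw := hS s hs (by linarith)
  have hbw : ⟪w₀, b⟫ ≤ ‖w₀‖ * ε :=
    (real_inner_le_norm w₀ b).trans (mul_le_mul_of_nonneg_left hb (norm_nonneg w₀))
  have hfar' : 2 * ε * (δ + ‖w₀‖) ≤ δ * ‖s + b‖ := by
    rwa [div_le_iff₀ hδ, mul_comm ‖s + b‖] at hfar
  rw [inner_add_right]
  nlinarith

variable [ProperSpace E]

theorem exists_inner_le_neg_mul_norm_of_isClosed_convex {S : Set E} (hScl : IsClosed S)
    (hSconv : Convex ℝ S) {w₀ : E}
    (hw₀ : w₀ ∈ interior {w : E | ∀ z ∈ recessionCone S, ⟪w, z⟫ ≤ 0}) :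
    ∃ δ > 0, ∃ R > 0, ∀ s ∈ S, R ≤ ‖s‖ → ⟪w₀, s⟫ ≤ -δ * ‖s‖ := by
  obtain ⟨r, hr, hcone⟩ := exists_inner_le_neg_mul_norm_of_mem_interior_polar hw₀
  by_contra! hfail
  choose s hsS hsR hsw using fun n : ℕ =>
    hfail (1 / (n + 1)) (by positivity) (n + 1) (by positivity)
  have hspos (n : ℕ) : 0 < ‖s n‖ := lt_of_lt_of_le (by positivity) (hsR n)
  have hsphere (n : ℕ) : ‖s n‖⁻¹ • s n ∈ sphere (0 : E) 1 := by
    rw [mem_sphere_zero_iff_norm, norm_smul, norm_inv, norm_norm, inv_mul_cancel₀ (hspos n).ne']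
  obtain ⟨u, hu, φ, hφ, hdir⟩ := (isCompact_sphere (0 : E) 1).tendsto_subseq hsphere
  have hnorm : Tendsto (fun n => ‖s (φ n)‖) atTop atTop :=
    tendsto_atTop_mono (fun n => hsR (φ n))
      ((tendsto_atTop_add_const_right _ 1 tendsto_natCast_atTop_atTop).comp hφ.tendsto_atTop)
  have hrec := mem_recessionCone_of_tendsto hScl hSconv (fun n => hsS (φ n)) hnorm hdir
  have hbound (n : ℕ) : -(1 / ((φ n : ℝ) + 1)) ≤ ⟪w₀, ‖s (φ n)‖⁻¹ • s (φ n)⟫ := by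
    rw [real_inner_smul_right, le_inv_mul_iff₀ (hspos _)]
    linarith [hsw (φ n)]
  have hnonneg : 0 ≤ ⟪w₀, u⟫ := by
    refine le_of_tendsto_of_tendsto' ?_ (tendsto_const_nhds.inner hdir) hbound
    rw [← neg_zero]
    exact (tendsto_one_div_add_atTop_nhds_zero_nat.comp hφ.tendsto_atTop).neg
  have hneg := hcone u hrec
  rw [mem_sphere_zero_iff_norm.mp hu, mul_one] at hneg
  linarith

end InnerProductSpace

theorem meril_arc_decay_estimate_general
    (S : Set ℂ) (hScl : IsClosed S) (hSconv : Convex ℝ S)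
    (w₀ : ℂ)
    (hw₀ : w₀ ∈ interior
      {w : ℂ | ∀ z ∈ {z : ℂ | ∀ s ∈ S, z + s ∈ S}, (z * (starRingEnd ℂ) w).re ≤ 0})
    (ε : ℝ) :
    ∃ δ > 0, ∃ R₀ > 0, ∀ z ∈ S + Metric.closedBall (0 : ℂ) ε,
      R₀ ≤ ‖z‖ → (z * (starRingEnd ℂ) w₀).re ≤ -δ * ‖z‖ := by
  simp only [← Complex.inner] at hw₀ ⊢
  obtain ⟨δ, hδ, R, hR, hS⟩ := exists_inner_le_neg_mul_norm_of_isClosed_convex hScl hSconv hw₀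
  exact exists_inner_le_neg_mul_norm_add_closedBall hδ hR hS ε

theorem meril_arc_decay_estimate
    (S : Set ℂ) (hSne : S.Nonempty) (hScl : IsClosed S) (hSconv : Convex ℝ S)
    (hnoline : ∀ z d : ℂ, d ≠ 0 → ¬ (∀ t : ℝ, z + t • d ∈ S))
    (w₀ : ℂ)
    (hw₀ : w₀ ∈ interior
      {w : ℂ | ∀ z ∈ {z : ℂ | ∀ s ∈ S, z + s ∈ S}, (z * (starRingEnd ℂ) w).re ≤ 0})
    (ε : ℝ) (hε : 0 < ε) :
    ∃ δ > 0, ∃ R₀ > 0, ∀ z ∈ S + Metric.closedBall (0 : ℂ) ε,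
      R₀ ≤ ‖z‖ → (z * (starRingEnd ℂ) w₀).re ≤ -δ * ‖z‖ :=
  meril_arc_decay_estimate_general S hScl hSconv w₀ hw₀ ε
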